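/- For each integer n ≥ 1, the function l_n(x) := ∫_x^∞ exp(-t²/2) dt - (h_{n-1}(x)/g_{n-1}(x)) exp(-x²/2), defined for x < 0, satisfies l_n'(x) = (2n-1)! exp(-x²/2) / g_{n-1}(x)² > 0 for all x < 0, and l_n(x) → +∞ as x → 0⁻. -/

import Mathlib

open Nat Finset MeasureTheory Real

noncomputable def gp (n : ℕ) (x : ℝ) : ℝ :=
  ∑ i ∈ Finset.range (n+1), ((2*n+1)! : ℝ) / ((2*(n-i))‼ * (2*i+1)!) * x^(2*i+1)

noncomputable def hp (n : ℕ) (x : ℝ) : ℝ :=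
  ∑ i ∈ Finset.range (n+1), ((n+i)! * (n-i)! : ℝ) / ((2*(n-i))‼ * (2*i)!) *
    (∑ j ∈ Finset.range (n-i+1), ((2*n+1).choose j : ℝ)) * x^(2*i)


noncomputable def PP : ℕ → ℝ → ℝ
  | 0 => fun _ => 1
  | 1 => fun x => x
  | (k+2) => fun x => x * PP (k+1) x + (k+1) * PP k x

noncomputable def QQ : ℕ → ℝ → ℝ
  | 0 => fun _ => 0
  | 1 => fun _ => 1
  | (k+2) => fun x => x * QQ (k+1) x + (k+1) * QQ k x

lemma PP_rec (k : ℕ) (x : ℝ) : PP (k+2) x = x * PP (k+1) x + (k+1) * PP k x := by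
  simp [PP]

lemma QQ_rec (k : ℕ) (x : ℝ) : QQ (k+2) x = x * QQ (k+1) x + (k+1) * QQ k x := by
  simp [QQ]

lemma PQ_deriv : ∀ k : ℕ, ∀ x : ℝ,
    HasDerivAt (PP k) (PP (k+1) x - x * PP k x) x ∧
    HasDerivAt (QQ k) (QQ (k+1) x - PP k x) x := by
  intro k
  induction k using Nat.twoStepInduction with
  | zero =>
    intro x
    constructor
    · have : HasDerivAt (PP 0) 0 x := by simpa [PP] using (hasDerivAt_const x (1:ℝ))
      convert this using 1
      simp [PP]
    · have : HasDerivAt (QQ 0) 0 x := by simpa [QQ] using (hasDerivAt_const x (0:ℝ))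
      convert this using 1
      simp [QQ, PP]
  | one =>
    intro x
    constructor
    · have : HasDerivAt (PP 1) 1 x := by simpa [PP] using (hasDerivAt_id' x)
      convert this using 1
      simp [PP, PP_rec]
    · have : HasDerivAt (QQ 1) 0 x := by simpa [QQ] using (hasDerivAt_const x (1:ℝ))
      convert this using 1
      simp [QQ, QQ_rec, PP]
  | more k IH IH' =>
    intro x
    have hP2 : PP (k+2) = fun y => y * PP (k+1) y + (k+1) * PP k y := by
      funext y; exact PP_rec k y
    have hQ2 : QQ (k+2) = fun y => y * QQ (k+1) y + (k+1) * QQ k y := by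
      funext y; exact QQ_rec k y
    constructor
    · have h1 : HasDerivAt (fun y => y * PP (k+1) y + (k+1) * PP k y)
          (1 * PP (k+1) x + x * (PP (k+2) x - x * PP (k+1) x)
            + (k+1) * (PP (k+1) x - x * PP k x)) x := by
        exact ((hasDerivAt_id x).mul (IH' x).1).add (((IH x).1).const_mul ((k:ℝ)+1))
      rw [hP2]
      convert h1 using 1
      rw [PP_rec k x, PP_rec (k+1) x, PP_rec k x]
      push_cast
      ring
    · have h1 : HasDerivAt (fun y => y * QQ (k+1) y + (k+1) * QQ k y)
          (1 * QQ (k+1) x + x * (QQ (k+2) x - PP (k+1) x)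
            + (k+1) * (QQ (k+1) x - PP k x)) x := by
        exact ((hasDerivAt_id x).mul (IH' x).2).add (((IH x).2).const_mul ((k:ℝ)+1))
      rw [hQ2]
      convert h1 using 1
      rw [QQ_rec (k+1) x, QQ_rec k x, PP_rec k x]
      push_cast
      ring

lemma caso' (PP QQ : ℕ → ℝ → ℝ)
    (hP : ∀ k x, PP (k+2) x = x * PP (k+1) x + (k+1) * PP k x)
    (hQ : ∀ k x, QQ (k+2) x = x * QQ (k+1) x + (k+1) * QQ k x)
    (hP0 : ∀ x, PP 0 x = 1) (hP1 : ∀ x, PP 1 x = x)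
    (hQ0 : ∀ x, QQ 0 x = 0) (hQ1 : ∀ x, QQ 1 x = 1) :
    ∀ k : ℕ, ∀ x : ℝ, PP (k+1) x * QQ k x - PP k x * QQ (k+1) x = (-1)^(k+1) * (k ! : ℝ) := by
  intro k
  induction k with
  | zero => intro x; simp [hP0, hP1, hQ0, hQ1]
  | succ k IH =>
    intro x
    rw [hP k x, hQ k x]
    have := IH x
    rw [pow_succ, Nat.factorial_succ]
    push_cast
    nlinarith [IH x]

-- partial binomial sums
def SB (n r : ℕ) : ℝ := ∑ j ∈ Finset.range r, ((n.choose j : ℕ) : ℝ)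

lemma SB_succ (n r : ℕ) : SB n (r+1) = SB n r + (n.choose r : ℝ) := by
  simp [SB, Finset.sum_range_succ]

lemma SB_pascal (n r : ℕ) : SB (n+1) (r+1) = SB n (r+1) + SB n r := by
  induction r with
  | zero => simp [SB]
  | succ r IH =>
    rw [SB_succ (n+1) (r+1), IH, SB_succ n (r+1), SB_succ n r]
    have : ((n+1).choose (r+1) : ℝ) = (n.choose (r+1) : ℝ) + (n.choose r : ℝ) := by
      rw [Nat.choose_succ_succ]
      push_cast; ring
    rw [this]; ring

-- (M+1)*C(M,r) = (r+1)*C(M+1,r+1)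
lemma succ_mul_choose_real (M r : ℕ) :
    ((M:ℝ)+1) * (M.choose r : ℝ) = ((r:ℝ)+1) * ((M+1).choose (r+1) : ℝ) := by
  have := Nat.add_one_mul_choose_eq M r
  have h2 : ((Nat.succ M * M.choose r : ℕ) : ℝ) = (((M+1).choose (r+1) * (r+1) : ℕ) : ℝ) := by
    exact_mod_cast congrArg (fun t : ℕ => (t : ℝ)) this
  push_cast at h2
  linarith

-- KEY: (M+1-r)·SB(M+2)(r+1) = (M+1-2r)·SB(M+1)(r+1) + 2(M+1)·SB M r
lemma keyA (M : ℕ) : ∀ r : ℕ,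
    ((M:ℝ)+1 - r) * SB (M+2) (r+1)
      = ((M:ℝ)+1 - 2*r) * SB (M+1) (r+1) + 2*((M:ℝ)+1) * SB M r := by
  intro r
  induction r with
  | zero => simp [SB]
  | succ r IH =>
    have e1 : ((M:ℝ)+2) * ((M+1).choose r : ℝ) = ((r:ℝ)+1) * ((M+2).choose (r+1) : ℝ) := by
      have := succ_mul_choose_real (M+1) r
      push_cast at this ⊢
      linarith
    have e2 : ((M:ℝ)+1) * (M.choose r : ℝ) = ((r:ℝ)+1) * ((M+1).choose (r+1) : ℝ) :=
      succ_mul_choose_real M r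
    have p1 : ((M+2).choose (r+1) : ℝ) = ((M+1).choose r : ℝ) + ((M+1).choose (r+1) : ℝ) := by
      rw [Nat.choose_succ_succ]; push_cast; ring
    have p2 : ((M+1).choose (r+1) : ℝ) = (M.choose r : ℝ) + (M.choose (r+1) : ℝ) := by
      rw [Nat.choose_succ_succ]; push_cast; ring
    have s1 : SB (M+2) (r+2) = SB (M+1) (r+2) + SB (M+1) (r+1) := SB_pascal (M+1) (r+1)
    rw [SB_succ (M+2) (r+1), SB_succ (M+1) (r+1), SB_succ M r] at *
    push_cast
    nlinarith [IH, e1, e2, p1, p2, SB_pascal (M+1) (r+1), SB_succ (M+1) (r+1),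
      SB_succ M r, SB_succ (M+1) r]
noncomputable def gpE (m : ℕ) (x : ℝ) : ℝ :=
  ∑ i ∈ Finset.range (m+1), ((2*m)! : ℝ) / ((2*(m-i))‼ * (2*i)!) * x^(2*i)

lemma helper1 (F C T : ℕ → ℝ) (m : ℕ)
    (h0 : F 0 = T 0)
    (hmid : ∀ i ∈ Finset.range m, F (i+1) = C i + T (i+1))
    (htop : F (m+1) = C m) :
    ∑ i ∈ Finset.range (m+2), F i
      = ∑ i ∈ Finset.range (m+1), C i + ∑ i ∈ Finset.range (m+1), T i := by
  rw [Finset.sum_range_succ' F (m+1), Finset.sum_range_succ (fun i => F (i+1)) m,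
    Finset.sum_range_succ C m, Finset.sum_range_succ' T m]
  rw [Finset.sum_congr rfl hmid, htop, h0, Finset.sum_add_distrib]
  ring

lemma helper2 (F C T : ℕ → ℝ) (m : ℕ)
    (hmid : ∀ i ∈ Finset.range m, F i = C i + T i)
    (htop : F m = C m) :
    ∑ i ∈ Finset.range (m+1), F i
      = ∑ i ∈ Finset.range (m+1), C i + ∑ i ∈ Finset.range m, T i := by
  rw [Finset.sum_range_succ F m, Finset.sum_range_succ C m,
    Finset.sum_congr rfl hmid, Finset.sum_add_distrib, htop]
  ring

lemma fact_cast_succ (n : ℕ) : ((n+1)! : ℝ) = ((n:ℝ)+1) * (n ! : ℝ) := by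
  rw [Nat.factorial_succ]; push_cast; ring

lemma dfact_cast_succ (n : ℕ) : ((2*(n+1))‼ : ℝ) = (2*(n:ℝ)+2) * ((2*n)‼ : ℝ) := by
  have h : 2*(n+1) = 2*n+2 := by ring
  rw [h, Nat.doubleFactorial_add_two]
  push_cast; ring

lemma fact_ne (n : ℕ) : ((n ! : ℕ) : ℝ) ≠ 0 := by
  exact_mod_cast (Nat.factorial_pos n).ne'

lemma dfact_ne (n : ℕ) : ((n‼ : ℕ) : ℝ) ≠ 0 := by
  exact_mod_cast (Nat.doubleFactorial_pos n).ne'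

lemma S1 (m : ℕ) (x : ℝ) :
    gpE (m+1) x = x * gp m x + (2*(m:ℝ)+1) * gpE m x := by
  rw [gpE, gp, gpE, Finset.mul_sum, Finset.mul_sum]
  refine helper1 _ _ _ m ?_ ?_ ?_
  · simp only [Nat.sub_zero]
    rw [dfact_cast_succ m, show (2*(m+1)) = (2*m+1)+1 from by ring,
      fact_cast_succ (2*m+1), fact_cast_succ (2*m)]
    have h1 := dfact_ne (2*m)
    have h2 := fact_ne (2*m)
    field_simp
    push_cast
    ring
  · intro i hi
    simp only [Finset.mem_range] at hi
    obtain ⟨k, rfl⟩ : ∃ k, m = i + k + 1 := ⟨m - i - 1, by omega⟩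
    have r1 : i + k + 1 + 1 - (i+1) = k+1 := by omega
    have r2 : i + k + 1 - i = k+1 := by omega
    have r3 : i + k + 1 - (i+1) = k := by omega
    rw [r1, r2, r3, dfact_cast_succ k,
      show (2*((i+k+1)+1)) = (2*(i+k+1)+1)+1 from by ring,
      fact_cast_succ (2*(i+k+1)+1), fact_cast_succ (2*(i+k+1)),
      show (2*(i+1)) = (2*i+1)+1 from by ring,
      fact_cast_succ (2*i+1), fact_cast_succ (2*i)]
    have h1 := dfact_ne (2*k)
    have h2 := fact_ne (2*(i+k+1))
    have h3 := fact_ne (2*i)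
    field_simp
    push_cast
    ring
  · have r1 : (m+1) - (m+1) = 0 := by omega
    have r2 : m - m = 0 := by omega
    rw [r1, r2]
    norm_num
    rw [show (2*(m+1)) = (2*m+1)+1 from by ring, fact_cast_succ (2*m+1)]
    have h2 := fact_ne (2*m+1)
    field_simp
    ring

lemma S2 (m : ℕ) (x : ℝ) :
    gp (m+1) x = x * gpE (m+1) x + (2*(m:ℝ)+2) * gp m x := by
  rw [gp, gpE, gp, Finset.mul_sum, Finset.mul_sum]
  refine helper2 _ _ _ (m+1) ?_ ?_
  · intro i hi
    simp only [Finset.mem_range] at hi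
    obtain ⟨k, rfl⟩ : ∃ k, m = i + k := ⟨m - i, by omega⟩
    have r1 : i + k + 1 - i = k+1 := by omega
    have r2 : i + k - i = k := by omega
    rw [r1, r2, dfact_cast_succ k,
      show (2*(i+k+1)+1) = ((2*(i+k)+1)+1)+1 from by ring,
      fact_cast_succ ((2*(i+k)+1)+1), fact_cast_succ (2*(i+k)+1),
      show (2*(i+k+1)) = (2*(i+k)+1)+1 from by ring, fact_cast_succ (2*(i+k)+1),
      show (2*i+1) = (2*i)+1 from by ring, fact_cast_succ (2*i)]
    have h1 := dfact_ne (2*k)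
    have h2 := fact_ne (2*(i+k)+1)
    have h3 := fact_ne (2*i)
    field_simp
    push_cast
    ring
  · have r1 : (m+1) - (m+1) = 0 := by omega
    rw [r1]
    norm_num
    rw [show (2*(m+1)+1) = (2*(m+1))+1 from rfl, fact_cast_succ (2*(m+1))]
    have h2 := fact_ne (2*(m+1))
    field_simp
    ring
lemma SB_one (n : ℕ) : SB n 1 = 1 := by simp [SB]

lemma SB_halfway (m : ℕ) : SB (2*m+1) (m+1) = (4:ℝ)^m := by
  have h := Nat.sum_range_choose_halfway m
  rw [SB, ← Nat.cast_sum, h]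
  push_cast
  ring

noncomputable def hpX (n : ℕ) (x : ℝ) : ℝ :=
  ∑ i ∈ Finset.range (n+1), ((n+i)! * (n-i)! : ℝ) / ((2*(n-i))‼ * (2*i)!) *
    SB (2*n+1) (n-i+1) * x^(2*i)

noncomputable def hpE (m : ℕ) (x : ℝ) : ℝ :=
  ∑ i ∈ Finset.range m, ((m+i)! * (m-1-i)! : ℝ) / ((2*(m-1-i))‼ * (2*i+1)!) *
    SB (2*m) (m-1-i+1) * x^(2*i+1)

lemma S3 (m : ℕ) (x : ℝ) :
    hpE (m+1) x = x * hpX m x + (2*(m:ℝ)+1) * hpE m x := by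
  rw [hpE, hpX, hpE, Finset.mul_sum, Finset.mul_sum]
  refine helper2 _ _ _ m ?_ ?_
  · intro i hi
    simp only [Finset.mem_range] at hi
    obtain ⟨k, rfl⟩ : ∃ k, m = i + k + 1 := ⟨m - i - 1, by omega⟩
    have r1 : i+k+1+1-1-i = k+1 := by omega
    have r2 : i+k+1-i = k+1 := by omega
    have r3 : i+k+1-1-i = k := by omega
    rw [r1, r2, r3, show k+1+1 = k+2 from rfl,
      show 2*(i+k+1+1) = 2*(i+k+1)+2 from by ring]
    have h2ik : (2*(i:ℝ)+(k:ℝ)+2) ≠ 0 := by positivity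
    have hα := keyA (2*(i+k+1)) (k+1)
    have hsolve : SB (2*(i+k+1)+2) (k+2)
        = ((2*(i:ℝ)+1) * SB (2*(i+k+1)+1) (k+2)
            + 2*(2*((i:ℝ)+(k:ℝ)+1)+1) * SB (2*(i+k+1)) (k+1)) / (2*(i:ℝ)+(k:ℝ)+2) := by
      rw [eq_div_iff h2ik]
      push_cast at hα
      linarith
    rw [hsolve]
    rw [show i+k+1+1+i = (2*i+k+1)+1 from by ring, fact_cast_succ (2*i+k+1),
      show i+k+1+i = 2*i+k+1 from by ring,
      fact_cast_succ k, dfact_cast_succ k,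
      show 2*i+1 = (2*i)+1 from rfl, fact_cast_succ (2*i)]
    have h1 := dfact_ne (2*k)
    have h2 := fact_ne (2*i+k+1)
    have h3 := fact_ne (2*i)
    have h4 := fact_ne k
    field_simp
    push_cast
    ring
  · have r1 : m+1-1-m = 0 := by omega
    have r2 : m - m = 0 := by omega
    rw [r1, r2, SB_one, SB_one,
      show m+1+m = (2*m)+1 from by ring, fact_cast_succ (2*m),
      show 2*m+1 = (2*m)+1 from rfl]
    have h2 := fact_ne (2*m)
    norm_num [Nat.doubleFactorial]
    field_simp
    ring

lemma S4 (m : ℕ) (x : ℝ) :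
    hpX (m+1) x = x * hpE (m+1) x + (2*(m:ℝ)+2) * hpX m x := by
  rw [hpX, hpE, hpX, Finset.mul_sum, Finset.mul_sum]
  refine helper1 _ _ _ m ?_ ?_ ?_
  · simp only [Nat.add_zero, Nat.sub_zero, Nat.mul_zero, pow_zero]
    rw [show 2*(m+1)+1 = 2*(m+1)+1 from rfl, SB_halfway (m+1), SB_halfway m,
      fact_cast_succ m, dfact_cast_succ m]
    have h1 := dfact_ne (2*m)
    have h2 := fact_ne m
    field_simp
    ring
  · intro i hi
    simp only [Finset.mem_range] at hi
    obtain ⟨k, rfl⟩ : ∃ k, m = i + k + 1 := ⟨m - i - 1, by omega⟩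
    have r1 : i+k+1+1-(i+1) = k+1 := by omega
    have r2 : i+k+1+1-1-i = k+1 := by omega
    have r3 : i+k+1-(i+1) = k := by omega
    rw [r1, r2, r3, show k+1+1 = k+2 from rfl,
      show 2*(i+k+1+1)+1 = (2*(i+k+1)+1)+2 from by ring,
      show 2*(i+k+1+1) = (2*(i+k+1)+1)+1 from by ring]
    have h2ik : (2*(i:ℝ)+(k:ℝ)+3) ≠ 0 := by positivity
    have hα := keyA (2*(i+k+1)+1) (k+1)
    have hsolve : SB ((2*(i+k+1)+1)+2) (k+2)
        = ((2*(i:ℝ)+2) * SB ((2*(i+k+1)+1)+1) (k+2)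
            + 2*(2*((i:ℝ)+(k:ℝ)+1)+2) * SB (2*(i+k+1)+1) (k+1)) / (2*(i:ℝ)+(k:ℝ)+3) := by
      rw [eq_div_iff h2ik]
      push_cast at hα
      linarith
    rw [hsolve]
    rw [show i+k+1+1+(i+1) = ((2*i+k+1)+1)+1 from by ring,
      show i+k+1+1+i = (2*i+k+1)+1 from by ring,
      show i+k+1+(i+1) = (2*i+k+1)+1 from by ring,
      show 2*(i+1) = (2*i+1)+1 from by ring,
      fact_cast_succ ((2*i+k+1)+1), fact_cast_succ (2*i+k+1),
      fact_cast_succ k, dfact_cast_succ k,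
      fact_cast_succ (2*i+1), fact_cast_succ (2*i)]
    have h1 := dfact_ne (2*k)
    have h2 := fact_ne (2*i+k+1)
    have h3 := fact_ne (2*i)
    have h4 := fact_ne k
    field_simp
    push_cast
    ring
  · have r1 : m+1-(m+1) = 0 := by omega
    have r2 : m+1-1-m = 0 := by omega
    rw [r1, r2, SB_one, SB_one,
      show m+1+(m+1) = (2*m+1)+1 from by ring, fact_cast_succ (2*m+1),
      show m+1+m = (2*m)+1 from by ring, fact_cast_succ (2*m),
      show 2*(m+1) = (2*m+1)+1 from by ring, fact_cast_succ (2*m+1),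
      show 2*m+1 = (2*m)+1 from rfl, fact_cast_succ (2*m)]
    have h2 := fact_ne (2*m)
    norm_num [Nat.doubleFactorial]
    field_simp
    ring
-- main induction: explicit sums equal recursive sequences
lemma main_eq (m : ℕ) (x : ℝ) :
    gpE m x = PP (2*m) x ∧ gp m x = PP (2*m+1) x ∧
    hpE m x = QQ (2*m) x ∧ hpX m x = QQ (2*m+1) x := by
  induction m with
  | zero =>
    refine ⟨?_, ?_, ?_, ?_⟩
    · simp [gpE, PP, Nat.doubleFactorial]
    · simp [gp, PP, Nat.doubleFactorial]
    · simp [hpE, QQ]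
    · simp [hpX, QQ, SB, Nat.doubleFactorial]
  | succ m IH =>
    obtain ⟨hgE, hg, hhE, hh⟩ := IH
    have e1 : gpE (m+1) x = PP (2*(m+1)) x := by
      rw [S1 m x, hgE, hg, show 2*(m+1) = (2*m)+2 from by ring, PP_rec (2*m) x]
      push_cast; ring
    have e2 : gp (m+1) x = PP (2*(m+1)+1) x := by
      rw [S2 m x, e1, hg, show 2*(m+1)+1 = (2*m+1)+2 from by ring, PP_rec (2*m+1) x,
        show 2*(m+1) = (2*m+1)+1 from by ring]
      push_cast; ring
    have e3 : hpE (m+1) x = QQ (2*(m+1)) x := by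
      rw [S3 m x, hhE, hh, show 2*(m+1) = (2*m)+2 from by ring, QQ_rec (2*m) x]
      push_cast; ring
    have e4 : hpX (m+1) x = QQ (2*(m+1)+1) x := by
      rw [S4 m x, e3, hh, show 2*(m+1)+1 = (2*m+1)+2 from by ring, QQ_rec (2*m+1) x,
        show 2*(m+1) = (2*m+1)+1 from by ring]
      push_cast; ring
    exact ⟨e1, e2, e3, e4⟩

lemma hp_eq_hpX (m : ℕ) (x : ℝ) : hp m x = hpX m x := rfl

lemma gp_eq (m : ℕ) (x : ℝ) : gp m x = PP (2*m+1) x := (main_eq m x).2.1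
lemma hp_eq (m : ℕ) (x : ℝ) : hp m x = QQ (2*m+1) x :=
  (hp_eq_hpX m x).trans (main_eq m x).2.2.2
lemma Wodd (m : ℕ) (x : ℝ) :
    PP (2*m+2) x * QQ (2*m+1) x - PP (2*m+1) x * QQ (2*m+2) x = ((2*m+1)! : ℝ) := by
  have h := caso' PP QQ (fun k x => PP_rec k x) (fun k x => QQ_rec k x)
    (fun x => by simp [PP]) (fun x => by simp [PP])
    (fun x => by simp [QQ]) (fun x => by simp [QQ]) (2*m+1) x
  have h2 : ((-1:ℝ))^(2*m+1+1) = 1 := by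
    rw [show 2*m+1+1 = 2*(m+1) from by ring, pow_mul]; norm_num
  rw [show 2*m+1+1 = 2*m+2 from rfl] at h
  rw [h]
  rw [show 2*m+1+1 = 2*m+2 from rfl] at h2
  rw [h2, one_mul]

lemma gp_neg (m : ℕ) {x : ℝ} (hx : x < 0) : gp m x < 0 := by
  rw [gp]
  apply Finset.sum_neg
  · intro i _
    apply mul_neg_of_pos_of_neg
    · apply _root_.div_pos
      · exact_mod_cast (2*m+1).factorial_pos
      · apply mul_pos
        · exact_mod_cast Nat.doubleFactorial_pos _
        · exact_mod_cast Nat.factorial_pos _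
    · exact Odd.pow_neg ⟨i, by ring⟩ hx
  · exact ⟨0, by simp⟩

lemma gp_zero (m : ℕ) : gp m 0 = 0 := by
  rw [gp]
  apply Finset.sum_eq_zero
  intro i _
  simp

lemma hp_zero_pos (m : ℕ) : 0 < hp m 0 := by
  rw [hp]
  rw [Finset.sum_eq_single_of_mem 0 (by simp)]
  · simp only [pow_zero, mul_one, Nat.add_zero, Nat.sub_zero, Nat.mul_zero]
    apply mul_pos
    · apply _root_.div_pos
      · apply mul_pos
        · exact_mod_cast Nat.factorial_pos _
        · exact_mod_cast Nat.factorial_pos _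
      · apply mul_pos
        · exact_mod_cast Nat.doubleFactorial_pos _
        · simp [Nat.factorial]
    · apply Finset.sum_pos'
      · intro j _; positivity
      · refine ⟨0, by simp, ?_⟩
        simp [Nat.choose_zero_right]
  · intro i _ hi
    have : (0:ℝ)^(2*i) = 0 := by
      apply zero_pow
      omega
    rw [this, mul_zero]

lemma gp_cont (m : ℕ) : Continuous (fun x => gp m x) := by
  unfold gp
  exact continuous_finset_sum _ fun i _ => continuous_const.mul (continuous_pow _)

lemma hp_cont (m : ℕ) : Continuous (fun x => hp m x) := by
  unfold hp
  exact continuous_finset_sum _ fun i _ => continuous_const.mul (continuous_pow _)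

lemma f_cont : Continuous (fun t : ℝ => Real.exp (-t^2/2)) := by
  fun_prop

lemma f_integrable : Integrable (fun t : ℝ => Real.exp (-t^2/2)) := by
  have h : (fun t : ℝ => Real.exp (-t^2/2)) = fun t => Real.exp (-(1/2 : ℝ)*t^2) := by
    funext t; ring_nf
  rw [h]
  exact integrable_exp_neg_mul_sq (by norm_num)

lemma I_split {y : ℝ} (hy : y ≤ 0) :
    (∫ t in Set.Ioi y, Real.exp (-t^2/2))
      = (∫ t in y..(0:ℝ), Real.exp (-t^2/2)) + ∫ t in Set.Ioi (0:ℝ), Real.exp (-t^2/2) := by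
  rw [intervalIntegral.integral_of_le hy]
  rw [← Set.Ioc_union_Ioi_eq_Ioi hy]
  rw [MeasureTheory.setIntegral_union (Set.Ioc_disjoint_Ioi le_rfl) measurableSet_Ioi
    f_integrable.integrableOn f_integrable.integrableOn]

lemma hasDeriv_main (m : ℕ) {x : ℝ} (hx : x < 0) :
    HasDerivAt (fun y : ℝ => (∫ t in Set.Ioi y, Real.exp (-t^2/2))
        - hp m y / gp m y * Real.exp (-y^2/2))
      (((2*m+1)! : ℝ) * Real.exp (-x^2/2) / (gp m x)^2) x := by
  have hgne : gp m x ≠ 0 := (gp_neg m hx).ne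
  have hPne : PP (2*m+1) x ≠ 0 := by rw [← gp_eq]; exact hgne
  -- derivative of the integral part
  have hI : HasDerivAt (fun u : ℝ => (∫ t in u..(0:ℝ), Real.exp (-t^2/2))
      + ∫ t in Set.Ioi (0:ℝ), Real.exp (-t^2/2)) (-Real.exp (-x^2/2)) x := by
    apply HasDerivAt.add_const
    exact intervalIntegral.integral_hasDerivAt_left
      (f_integrable.intervalIntegrable)
      (f_cont.stronglyMeasurableAtFilter _ _)
      f_cont.continuousAt
  -- derivative of the rational*exp part
  have hq : HasDerivAt (fun y => QQ (2*m+1) y) (QQ (2*m+2) x - PP (2*m+1) x) x := by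
    have := (PQ_deriv (2*m+1) x).2
    simpa using this
  have hp' : HasDerivAt (fun y => PP (2*m+1) y) (PP (2*m+2) x - x * PP (2*m+1) x) x := by
    have := (PQ_deriv (2*m+1) x).1
    simpa using this
  have hdiv : HasDerivAt (fun y => QQ (2*m+1) y / PP (2*m+1) y)
      (((QQ (2*m+2) x - PP (2*m+1) x) * PP (2*m+1) x
        - QQ (2*m+1) x * (PP (2*m+2) x - x * PP (2*m+1) x)) / PP (2*m+1) x ^ 2) x :=
    hq.div hp' hPne
  have hexparg : HasDerivAt (fun y : ℝ => -y^2/2) (-x) x := by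
    have h1 : HasDerivAt (fun y : ℝ => y^2) (2*x) x := by
      simpa using hasDerivAt_pow 2 x
    have h2 := (h1.neg).div_const 2
    refine (h2.congr_deriv (Eq.symm ?_))
    ring
  have hexp : HasDerivAt (fun y : ℝ => Real.exp (-y^2/2)) (Real.exp (-x^2/2) * (-x)) x :=
    (Real.hasDerivAt_exp _).comp x hexparg
  have hmul := hdiv.mul hexp
  have htot := hI.sub hmul
  have heq : (fun y : ℝ => (∫ t in Set.Ioi y, Real.exp (-t^2/2))
        - hp m y / gp m y * Real.exp (-y^2/2))
      =ᶠ[nhds x] (fun y : ℝ => ((∫ t in y..(0:ℝ), Real.exp (-t^2/2))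
        + ∫ t in Set.Ioi (0:ℝ), Real.exp (-t^2/2))
        - QQ (2*m+1) y / PP (2*m+1) y * Real.exp (-y^2/2)) := by
    filter_upwards [Iio_mem_nhds hx] with y hy
    rw [I_split (le_of_lt hy), gp_eq, hp_eq]
  have hfinal := htot.congr_of_eventuallyEq heq
  refine (hfinal.congr_deriv (Eq.symm ?_))
  have hW := Wodd m x
  rw [gp_eq]
  field_simp
  linear_combination (-1 : ℝ) * hW
lemma tendsto_main (m : ℕ) :
    Filter.Tendsto
      (fun y : ℝ => (∫ t in Set.Ioi y, Real.exp (-t^2/2))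
          - hp m y / gp m y * Real.exp (-y^2/2))
      (nhdsWithin 0 (Set.Iio 0)) Filter.atTop := by
  have hgp0 : Filter.Tendsto (fun y => -(gp m y)) (nhdsWithin 0 (Set.Iio 0))
      (nhdsWithin 0 (Set.Ioi 0)) := by
    rw [tendsto_nhdsWithin_iff]
    constructor
    · have h := ((gp_cont m).neg).tendsto 0
      simp only [Pi.neg_apply, gp_zero m, neg_zero] at h
      exact h.mono_left nhdsWithin_le_nhds
    · filter_upwards [self_mem_nhdsWithin] with y hy
      simp only [Set.mem_Ioi]
      have := gp_neg m (hy : y < 0)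
      linarith
  have hinv : Filter.Tendsto (fun y => (-(gp m y))⁻¹) (nhdsWithin 0 (Set.Iio 0))
      Filter.atTop := hgp0.inv_tendsto_nhdsGT_zero
  have hhp : Filter.Tendsto (fun y => hp m y) (nhdsWithin 0 (Set.Iio 0)) (nhds (hp m 0)) :=
    ((hp_cont m).tendsto 0).mono_left nhdsWithin_le_nhds
  have hmul1 : Filter.Tendsto (fun y => hp m y * (-(gp m y))⁻¹)
      (nhdsWithin 0 (Set.Iio 0)) Filter.atTop :=
    Filter.Tendsto.pos_mul_atTop (hp_zero_pos m) hhp hinv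
  have hexp : Filter.Tendsto (fun y : ℝ => Real.exp (-y^2/2))
      (nhdsWithin 0 (Set.Iio 0)) (nhds 1) := by
    have h := f_cont.tendsto 0
    norm_num at h
    exact h.mono_left nhdsWithin_le_nhds
  have hmul2 : Filter.Tendsto (fun y => hp m y * (-(gp m y))⁻¹ * Real.exp (-y^2/2))
      (nhdsWithin 0 (Set.Iio 0)) Filter.atTop :=
    hmul1.atTop_mul_pos one_pos hexp
  apply Filter.tendsto_atTop_mono _ hmul2
  intro y
  have h1 : hp m y * (-(gp m y))⁻¹ * Real.exp (-y^2/2)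
      = -(hp m y / gp m y * Real.exp (-y^2/2)) := by
    rw [inv_neg, div_eq_mul_inv]
    ring
  rw [h1]
  have h2 : (0:ℝ) ≤ ∫ t in Set.Ioi y, Real.exp (-t^2/2) :=
    MeasureTheory.setIntegral_nonneg measurableSet_Ioi (fun t _ => (Real.exp_pos _).le)
  linarith

theorem stmt13 (n : ℕ) (hn : 1 ≤ n) :
    (∀ x : ℝ, x < 0 →
      deriv (fun y : ℝ => (∫ t in Set.Ioi y, Real.exp (-t^2/2))
          - hp (n-1) y / gp (n-1) y * Real.exp (-y^2/2)) x
        = (2*n-1)! * Real.exp (-x^2/2) / (gp (n-1) x)^2 ∧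
      0 < (2*n-1)! * Real.exp (-x^2/2) / (gp (n-1) x)^2) ∧
    Filter.Tendsto
      (fun y : ℝ => (∫ t in Set.Ioi y, Real.exp (-t^2/2))
          - hp (n-1) y / gp (n-1) y * Real.exp (-y^2/2))
      (nhdsWithin 0 (Set.Iio 0)) Filter.atTop := by
  have hm : 2*(n-1)+1 = 2*n-1 := by omega
  constructor
  · intro x hx
    have hgne : gp (n-1) x ≠ 0 := (gp_neg (n-1) hx).ne
    constructor
    · have hd := (hasDeriv_main (n-1) hx).deriv
      rw [hd, hm]
    · apply _root_.div_pos
      · apply mul_pos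
        · exact_mod_cast Nat.factorial_pos _
        · exact Real.exp_pos _
      · exact pow_two_pos_of_ne_zero hgne
  · exact tendsto_main (n-1)
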